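/- Let β, N₀, κ, P, M, ν > 0 and μ, D₀, η ≥ 0 be real numbers. The function EE(B) = B·log₂(1 + MPβ/(BN₀)) / (P/κ + μ + (D₀ + νB)M + ηB·log₂(1 + MPβ/(BN₀))) on the domain B > 0 attains its maximum at a unique point B_opt > 0; that is, there exists a unique B_opt > 0 such that EE(B_opt) ≥ EE(B) for all B > 0. -/

import Mathlib

/-- The energy efficiency as a function of the bandwidth `B`, for a fixed transmit power
`P` and number of antennas `M`. -/
noncomputable def EE8 (β N₀ κ P M μ D₀ ν η B : ℝ) : ℝ :=
  B * Real.logb 2 (1 + M * P * β / (B * N₀)) /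
    (P / κ + μ + (D₀ + ν * B) * M +
      η * B * Real.logb 2 (1 + M * P * β / (B * N₀)))

/-! With `c = MPβ/N₀`, `a = νM`, `C = P/κ + μ + D₀M` and the rate `R(B) = B log(1 + c/B)`, the
energy efficiency equals `1 / (log 2 · (C + aB)/R(B) + η)`, so it suffices that the power per rate
`(C + aB)/R(B)` has a unique minimiser. Its derivative has the sign of `a R - (C + aB) R'`, whose
own derivative `-(C + aB) R''` is positive because `R` is strictly concave; this function is
negative for small `B` and positive for large `B`, hence it changes sign exactly once. -/

open Real Set

theorem existsUnique_forall_le_of_deriv_sign_change {f f' : ℝ → ℝ} {a x₀ : ℝ} (hx₀ : a < x₀)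
    (hf : ∀ x, a < x → HasDerivAt f (f' x) x)
    (hneg : ∀ x, a < x → x < x₀ → f' x < 0) (hpos : ∀ x, x₀ < x → 0 < f' x) :
    ∃! x, a < x ∧ ∀ y, a < y → f x ≤ f y := by
  have hcont : ContinuousOn f (Ioi a) := fun x hx => (hf x hx).continuousAt.continuousWithinAt
  have hanti : StrictAntiOn f (Ioc a x₀) :=
    strictAntiOn_of_deriv_neg (convex_Ioc a x₀) (hcont.mono Ioc_subset_Ioi_self) fun x hx => by
      rw [interior_Ioc] at hx
      rw [(hf x hx.1).deriv]
      exact hneg x hx.1 hx.2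
  have hmono : StrictMonoOn f (Ici x₀) :=
    strictMonoOn_of_deriv_pos (convex_Ici x₀) (hcont.mono fun x hx => hx₀.trans_le hx)
      fun x hx => by
        rw [interior_Ici] at hx
        rw [(hf x (hx₀.trans hx)).deriv]
        exact hpos x hx
  have hlt : ∀ y, a < y → y ≠ x₀ → f x₀ < f y := by
    intro y hy hne
    rcases hne.lt_or_gt with h | h
    · exact hanti ⟨hy, h.le⟩ ⟨hx₀, le_rfl⟩ h
    · exact hmono (mem_Ici.2 le_rfl) h.le h
  refine ⟨x₀, ⟨hx₀, fun y hy => ?_⟩, fun x ⟨hx, hmin⟩ => ?_⟩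
  · rcases eq_or_ne y x₀ with rfl | hne
    · rfl
    · exact (hlt y hy hne).le
  · by_contra hne
    exact (hmin x₀ hx₀).not_gt (hlt x hx hne)

namespace Real

theorem div_one_add_lt_log_one_add {x : ℝ} (hx : 0 < x) : x / (1 + x) < log (1 + x) := by
  have h := log_lt_sub_one_of_pos (inv_pos.2 (by linarith : 0 < 1 + x)) (by
    rw [Ne, inv_eq_one]; linarith)
  rw [log_inv] at h
  have : (1 + x)⁻¹ - 1 = -(x / (1 + x)) := by field_simp; ring
  linarith

theorem log_one_add_le_self {x : ℝ} (hx : -1 < x) : log (1 + x) ≤ x := by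
  linarith [log_le_sub_one_of_pos (by linarith : 0 < 1 + x)]

end Real

namespace EnergyEfficiency

noncomputable def rate (c B : ℝ) : ℝ := B * log (1 + c / B)

noncomputable def marginalRate (c B : ℝ) : ℝ := log (1 + c / B) - c / (B + c)

noncomputable def powerPerRate (c a C B : ℝ) : ℝ := (C + a * B) / rate c B

noncomputable def stationarityGap (c a C B : ℝ) : ℝ :=
  a * rate c B - (C + a * B) * marginalRate c B

variable {c a C B : ℝ}

theorem div_add_lt_log_one_add_div (hc : 0 < c) (hB : 0 < B) :
    c / (B + c) < log (1 + c / B) := by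
  have h := div_one_add_lt_log_one_add (div_pos hc hB)
  rwa [show c / B / (1 + c / B) = c / (B + c) by field_simp] at h

theorem rate_pos (hc : 0 < c) (hB : 0 < B) : 0 < rate c B :=
  mul_pos hB (log_pos (by linarith [div_pos hc hB]))

theorem rate_le (hc : 0 < c) (hB : 0 < B) : rate c B ≤ c := by
  have h := mul_le_mul_of_nonneg_left
    (log_one_add_le_self (x := c / B) (by linarith [div_pos hc hB])) hB.le
  rwa [mul_div_cancel₀ c hB.ne'] at h

theorem marginalRate_pos (hc : 0 < c) (hB : 0 < B) : 0 < marginalRate c B :=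
  sub_pos.2 (div_add_lt_log_one_add_div hc hB)

theorem hasDerivAt_log_one_add_div (hc : 0 < c) (hB : 0 < B) :
    HasDerivAt (fun B => log (1 + c / B)) (-(c / (B * (B + c)))) B := by
  have h := (((hasDerivAt_const B c).fun_div (hasDerivAt_id' B) hB.ne').const_add 1).log
    (by positivity)
  refine h.congr_deriv ?_
  have : B + c ≠ 0 := by linarith
  field_simp
  ring

theorem hasDerivAt_rate (hc : 0 < c) (hB : 0 < B) :
    HasDerivAt (rate c) (marginalRate c B) B := by
  refine ((hasDerivAt_id' B).mul (hasDerivAt_log_one_add_div hc hB)).congr_deriv ?_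
  have : B + c ≠ 0 := by linarith
  simp only [marginalRate]
  field_simp
  ring

theorem hasDerivAt_marginalRate (hc : 0 < c) (hB : 0 < B) :
    HasDerivAt (marginalRate c) (-(c ^ 2 / (B * (B + c) ^ 2))) B := by
  have hBc : B + c ≠ 0 := by linarith
  refine ((hasDerivAt_log_one_add_div hc hB).sub ((hasDerivAt_const B c).fun_div
    ((hasDerivAt_id' B).add_const c) hBc)).congr_deriv ?_
  field_simp
  ring

theorem hasDerivAt_stationarityGap (hc : 0 < c) (hB : 0 < B) :
    HasDerivAt (stationarityGap c a C) ((C + a * B) * c ^ 2 / (B * (B + c) ^ 2)) B := by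
  have hlin : HasDerivAt (fun x => C + a * x) a B := by
    simpa using ((hasDerivAt_id' B).const_mul a).const_add C
  refine (((hasDerivAt_rate hc hB).const_mul a).sub
    (hlin.mul (hasDerivAt_marginalRate hc hB))).congr_deriv ?_
  ring

theorem hasDerivAt_powerPerRate (hc : 0 < c) (hB : 0 < B) :
    HasDerivAt (powerPerRate c a C) (stationarityGap c a C B / rate c B ^ 2) B := by
  have hlin : HasDerivAt (fun x => C + a * x) a B := by
    simpa using ((hasDerivAt_id' B).const_mul a).const_add C
  exact hlin.fun_div (hasDerivAt_rate hc hB) (rate_pos hc hB).ne'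

theorem stationarityGap_strictMonoOn (hc : 0 < c) (ha : 0 ≤ a) (hC : 0 < C) :
    StrictMonoOn (stationarityGap c a C) (Ioi 0) := by
  refine strictMonoOn_of_deriv_pos (convex_Ioi 0) (fun x hx =>
    (hasDerivAt_stationarityGap hc hx).continuousAt.continuousWithinAt) fun x hx => ?_
  rw [interior_Ioi] at hx
  have hx : 0 < x := hx
  rw [(hasDerivAt_stationarityGap hc hx).deriv]
  have : 0 < C + a * x := by positivity
  positivity

theorem stationarityGap_neg (hc : 0 < c) (ha : 0 ≤ a) (hC : 0 < C) (hB : 0 < B)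
    (h : a * c < C * (log (1 + c / B) - 1)) : stationarityGap c a C B < 0 := by
  have hrate : a * rate c B ≤ a * c := mul_le_mul_of_nonneg_left (rate_le hc hB) ha
  have hmarg : log (1 + c / B) - 1 < marginalRate c B := by
    have : c / (B + c) < 1 := (div_lt_one (by linarith)).2 (by linarith)
    simp only [marginalRate]
    linarith
  have hBmarg : 0 ≤ a * B * marginalRate c B := by
    have := marginalRate_pos hc hB
    positivity
  have := mul_lt_mul_of_pos_left hmarg hC
  rw [stationarityGap, add_mul]
  linarith

theorem stationarityGap_pos (hc : 0 < c) (ha : 0 ≤ a) (hC : 0 ≤ C) (hB : 0 < B)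
    (h : C * c < a * B * (B - c)) : 0 < stationarityGap c a C B := by
  have hBc : 0 < B + c := by linarith
  have hrate : a * (B * (c / (B + c))) ≤ a * rate c B :=
    mul_le_mul_of_nonneg_left
      (mul_le_mul_of_nonneg_left (div_add_lt_log_one_add_div hc hB).le hB.le) ha
  have hmarg : (C + a * B) * marginalRate c B ≤ (C + a * B) * (c / B - c / (B + c)) := by
    have := log_one_add_le_self (x := c / B) (by linarith [div_pos hc hB])
    exact mul_le_mul_of_nonneg_left (by simp only [marginalRate]; linarith) (by positivity)
  have hlower : a * (B * (c / (B + c))) - (C + a * B) * (c / B - c / (B + c)) =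
      c * (a * B * (B - c) - C * c) / (B * (B + c)) := by
    field_simp
    ring
  have : 0 < c * (a * B * (B - c) - C * c) / (B * (B + c)) :=
    div_pos (mul_pos hc (by linarith)) (by positivity)
  simp only [stationarityGap]
  linarith

theorem exists_stationarityGap_eq_zero (hc : 0 < c) (ha : 0 < a) (hC : 0 < C) :
    ∃ B₀, 0 < B₀ ∧ stationarityGap c a C B₀ = 0 := by
  set B₁ := c / exp (1 + a * c / C)
  set B₂ := c + 1 + C * c / a
  have hB₁ : 0 < B₁ := by positivity
  have hB₂ : 0 < B₂ := by positivity
  have hneg : stationarityGap c a C B₁ < 0 := by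
    refine stationarityGap_neg hc ha.le hC hB₁ ?_
    have : 1 + a * c / C < log (1 + c / B₁) := by
      rw [lt_log_iff_exp_lt (by positivity), div_div_cancel₀ hc.ne']
      linarith
    have := mul_lt_mul_of_pos_left this hC
    rw [mul_add, mul_div_cancel₀ _ hC.ne'] at this
    linarith
  have hpos : 0 < stationarityGap c a C B₂ := by
    refine stationarityGap_pos hc ha.le hC.le hB₂ ?_
    have : a * B₂ * (B₂ - c) = B₂ * (a + C * c) := by
      simp only [B₂]
      field_simp
      ring
    have hB₂_gt_one : 1 < B₂ := by
      have : 0 < C * c / a := by positivity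
      simp only [B₂]
      linarith
    rw [this]
    nlinarith [mul_pos (sub_pos.2 hB₂_gt_one) (by positivity : 0 < a + C * c)]
  have hcont : ContinuousOn (stationarityGap c a C) (uIcc B₁ B₂) := fun x hx =>
    (hasDerivAt_stationarityGap hc (lt_of_lt_of_le (lt_min hB₁ hB₂) hx.1)).continuousAt
      |>.continuousWithinAt
  obtain ⟨B₀, hB₀, hzero⟩ :=
    intermediate_value_uIcc hcont (mem_uIcc.2 (Or.inl ⟨hneg.le, hpos.le⟩))
  exact ⟨B₀, lt_of_lt_of_le (lt_min hB₁ hB₂) hB₀.1, hzero⟩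

theorem existsUnique_forall_powerPerRate_le (hc : 0 < c) (ha : 0 < a) (hC : 0 < C) :
    ∃! B, 0 < B ∧ ∀ B', 0 < B' → powerPerRate c a C B ≤ powerPerRate c a C B' := by
  obtain ⟨B₀, hB₀, hzero⟩ := exists_stationarityGap_eq_zero hc ha hC
  have hmono := stationarityGap_strictMonoOn hc ha.le hC
  refine existsUnique_forall_le_of_deriv_sign_change hB₀
    (fun x hx => hasDerivAt_powerPerRate hc hx)
    (fun x hx hlt => div_neg_of_neg_of_pos ?_ (pow_pos (rate_pos hc hx) 2))
    (fun x hlt => div_pos ?_ (pow_pos (rate_pos hc (hB₀.trans hlt)) 2))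
  · exact hzero ▸ hmono hx hB₀ hlt
  · exact hzero ▸ hmono hB₀ (hB₀.trans hlt : 0 < x) hlt

theorem EE8_eq_one_div {β N₀ κ P M μ D₀ ν η : ℝ} (hc : 0 < M * P * β / N₀) (hB : 0 < B) :
    EE8 β N₀ κ P M μ D₀ ν η B =
      1 / (log 2 * powerPerRate (M * P * β / N₀) (ν * M) (P / κ + μ + D₀ * M) B + η) := by
  have hL : 0 < log (1 + M * P * β / N₀ / B) := log_pos (by linarith [div_pos hc hB])
  have hlog2 := log_pos one_lt_two
  rw [EE8, powerPerRate, rate, logb, mul_comm B N₀, ← div_div]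
  generalize log (1 + M * P * β / N₀ / B) = L at *
  field_simp
  ring

theorem EE8_le_EE8_iff {β N₀ κ P M μ D₀ ν η B B' : ℝ} (hc : 0 < M * P * β / N₀)
    (ha : 0 ≤ ν * M) (hC : 0 < P / κ + μ + D₀ * M) (hη : 0 ≤ η) (hB : 0 < B) (hB' : 0 < B') :
    EE8 β N₀ κ P M μ D₀ ν η B ≤ EE8 β N₀ κ P M μ D₀ ν η B' ↔
      powerPerRate (M * P * β / N₀) (ν * M) (P / κ + μ + D₀ * M) B' ≤
        powerPerRate (M * P * β / N₀) (ν * M) (P / κ + μ + D₀ * M) B := by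
  have hpos : ∀ x, 0 < x → 0 < log 2 * powerPerRate (M * P * β / N₀) (ν * M)
      (P / κ + μ + D₀ * M) x + η := fun x hx => by
    have := rate_pos hc hx
    have : 0 < powerPerRate (M * P * β / N₀) (ν * M) (P / κ + μ + D₀ * M) x := by
      unfold powerPerRate; positivity
    have := log_pos one_lt_two
    positivity
  rw [EE8_eq_one_div hc hB, EE8_eq_one_div hc hB',
    one_div_le_one_div (hpos B hB) (hpos B' hB'), add_le_add_iff_right,
    mul_le_mul_iff_right₀ (log_pos one_lt_two)]

end EnergyEfficiency

open EnergyEfficiency in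
/-- Lemma 2 of the paper: the energy efficiency on `B > 0` attains its maximum at a unique
point `B_opt > 0`. -/
theorem stmt_8 (β N₀ κ P M ν μ D₀ η : ℝ)
    (hβ : 0 < β) (hN : 0 < N₀) (hκ : 0 < κ) (hP : 0 < P) (hM : 0 < M) (hν : 0 < ν)
    (hμ : 0 ≤ μ) (hD : 0 ≤ D₀) (hη : 0 ≤ η) :
    ∃! Bopt : ℝ, 0 < Bopt ∧
      ∀ B : ℝ, 0 < B → EE8 β N₀ κ P M μ D₀ ν η B ≤ EE8 β N₀ κ P M μ D₀ ν η Bopt := by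
  have hc : 0 < M * P * β / N₀ := by positivity
  have ha : 0 < ν * M := mul_pos hν hM
  have hC : 0 < P / κ + μ + D₀ * M := by positivity
  refine (existsUnique_congr fun Bopt => ?_).2 (existsUnique_forall_powerPerRate_le hc ha hC)
  exact and_congr_right fun hBopt => forall₂_congr fun B hB =>
    EE8_le_EE8_iff hc ha.le hC hη hB hBopt
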